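/- Let H₀ be a bounded self-adjoint operator on ℓ²(ℤᵈ) and Λ ⊆ ℤᵈ. For every z ∈ ℂ with Im z ≠ 0, the restricted free resolvent G₀^Λ(z) = Π(z − H₀)⁻¹Π* is invertible in the bounded operators on ℓ²(Λ). -/

import Mathlib

/-!
Write `R = (z - H₀)⁻¹`. For `u = R f` the form `⟪u, (z - H₀) u⟫ = ⟪R f, f⟫` has imaginary part
`Im z ‖u‖²`, and `‖u‖ ≥ c ‖f‖` because `R` is invertible, so `|⟪R f, f⟫| ≥ |Im z| c² ‖f‖²`.
Compressing by the coisometry `Φ` keeps this lower bound on the quadratic form, and an operator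
whose quadratic form is bounded below in this way is invertible (Lax–Milgram).
-/

open ContinuousLinearMap

open scoped NNReal InnerProductSpace

section Resolvent

variable {E : Type*} [NormedAddCommGroup E] [InnerProductSpace ℂ E] [CompleteSpace E]
  {H : E →L[ℂ] E}

lemma IsSelfAdjoint.isUnit_smul_one_sub (hH : IsSelfAdjoint H) {z : ℂ} (hz : z.im ≠ 0) :
    IsUnit (z • 1 - H) := by
  have hσ : z ∉ spectrum ℂ H := fun hmem ↦ hz (hH.im_eq_zero_of_mem_spectrum hmem)
  rwa [spectrum.notMem_iff, Algebra.algebraMap_eq_smul_one] at hσ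

lemma IsSelfAdjoint.im_inner_smul_one_sub_apply_self (hH : IsSelfAdjoint H) (z : ℂ) (u : E) :
    (⟪u, (z • 1 - H) u⟫_ℂ).im = z.im * ‖u‖ ^ 2 := by
  have hHu : (⟪u, H u⟫_ℂ).im = 0 := hH.isSymmetric.im_inner_self_apply u
  simp [hHu, inner_self_eq_norm_sq_to_K, ← Complex.ofReal_pow]

lemma IsSelfAdjoint.exists_le_norm_inner_resolvent (hH : IsSelfAdjoint H) {z : ℂ}
    (hz : z.im ≠ 0) :
    ∃ c : ℝ≥0, 0 < c ∧ ∀ f, ‖f‖ ^ 2 * c ≤ ‖⟪Ring.inverse (z • 1 - H) f, f⟫_ℂ‖ := by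
  set A : E →L[ℂ] E := z • 1 - H
  have hA : IsUnit A := hH.isUnit_smul_one_sub hz
  obtain ⟨c, hc, hRc⟩ := antilipschitzWith_iff_exists_mul_le_norm.mp
    (antilipschitz_of_isEmbedding _ (isHomeomorph_of_isUnit hA.ringInverse).isEmbedding)
  refine ⟨⟨|z.im| * c ^ 2, by positivity⟩, by change (0 : ℝ) < _; positivity, fun f ↦ ?_⟩
  set u := Ring.inverse A f
  have hAu : A u = f := by
    simpa using congr($(Ring.mul_inverse_cancel A hA) f)
  calc ‖f‖ ^ 2 * (|z.im| * c ^ 2) = |z.im| * (c * ‖f‖) ^ 2 := by ring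
    _ ≤ |z.im| * ‖u‖ ^ 2 := by gcongr; exact hRc f
    _ = |(⟪u, A u⟫_ℂ).im| := by
      rw [hH.im_inner_smul_one_sub_apply_self, abs_mul, abs_of_nonneg (sq_nonneg ‖u‖)]
    _ ≤ ‖⟪u, f⟫_ℂ‖ := by rw [hAu]; exact Complex.abs_im_le_norm _

end Resolvent

lemma ContinuousLinearMap.le_norm_inner_comp_comp_adjoint {𝕜 E F : Type*} [RCLike 𝕜]
    [NormedAddCommGroup E] [InnerProductSpace 𝕜 E] [CompleteSpace E]
    [NormedAddCommGroup F] [InnerProductSpace 𝕜 F] [CompleteSpace F]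
    {S : E →L[𝕜] E} {c : ℝ≥0} (hS : ∀ f, ‖f‖ ^ 2 * c ≤ ‖⟪S f, f⟫_𝕜‖)
    {Φ : E →L[𝕜] F} (hΦ : Φ ∘L adjoint Φ = 1) (g : F) :
    ‖g‖ ^ 2 * c ≤ ‖⟪(Φ ∘L S ∘L adjoint Φ) g, g⟫_𝕜‖ := by
  have hΦ' : ‖adjoint Φ g‖ = ‖g‖ :=
    (norm_map_iff_adjoint_comp_self _).mpr (by rwa [adjoint_adjoint]) g
  rw [comp_apply, comp_apply, ← adjoint_inner_right, ← hΦ']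
  exact hS _

theorem stmt7_general (d : ℕ) (Λ : Set (Fin d → ℤ))
    (H₀ : lp (fun _ : Fin d → ℤ => ℂ) 2 →L[ℂ] lp (fun _ : Fin d → ℤ => ℂ) 2)
    (hH₀ : IsSelfAdjoint H₀)
    (Φ : lp (fun _ : Fin d → ℤ => ℂ) 2 →L[ℂ] lp (fun _ : Λ => ℂ) 2)
    (hΦcoiso : Φ ∘L ContinuousLinearMap.adjoint Φ = 1)
    (z : ℂ) (hz : z.im ≠ 0) :
    IsUnit (Φ ∘L Ring.inverse (z • 1 - H₀) ∘L ContinuousLinearMap.adjoint Φ) := by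
  obtain ⟨c, hc, hR⟩ := hH₀.exists_le_norm_inner_resolvent hz
  exact isUnit_of_forall_le_norm_inner_map _ hc (le_norm_inner_comp_comp_adjoint hR hΦcoiso)

/-- For a bounded self-adjoint `H₀` on `ℓ²(ℤᵈ)` and `Λ ⊆ ℤᵈ` with restriction
map `Φ`, the restricted free resolvent `G₀^Λ(z) = Φ (z - H₀)⁻¹ Φ*` is invertible in the bounded
operators on `ℓ²(Λ)` for every `z` with `Im z ≠ 0`. -/
theorem stmt7 (d : ℕ) (Λ : Set (Fin d → ℤ))
    (H₀ : lp (fun _ : Fin d → ℤ => ℂ) 2 →L[ℂ] lp (fun _ : Fin d → ℤ => ℂ) 2)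
    (hH₀ : IsSelfAdjoint H₀)
    (Φ : lp (fun _ : Fin d → ℤ => ℂ) 2 →L[ℂ] lp (fun _ : Λ => ℂ) 2)
    (hΦ : ∀ (f : lp (fun _ : Fin d → ℤ => ℂ) 2) (n : Λ), (Φ f) n = f n)
    (hΦcoiso : Φ ∘L ContinuousLinearMap.adjoint Φ = 1)
    (z : ℂ) (hz : z.im ≠ 0) :
    IsUnit (Φ ∘L Ring.inverse (z • 1 - H₀) ∘L ContinuousLinearMap.adjoint Φ) :=
  stmt7_general d Λ H₀ hH₀ Φ hΦcoiso z hz
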